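/- Let μ be a probability measure on ℂ with compact support, and suppose X_1, …, X_n are independent and identically distributed random variables with distribution μ. Then for every ε > 0 there exist constants C, c > 0 (depending only on μ and ε) such that, with probability at least 1 − C e^{−cn}, the polynomial p_n(z) := ∏_{j=1}^n (z − X_j) has no critical points (roots of p_n') outside the set N_μ(ε). -/

import Mathlib

open MeasureTheory ProbabilityTheory Filter Polynomial

noncomputable section

/-- The support of a measure on ℂ: points all of whose neighborhoods have positive measure. -/
def measSupp (μ : Measure ℂ) : Set ℂ := {x | ∀ U ∈ nhds x, μ U ≠ 0}

/-- The Cauchy–Stieltjes transform m_μ(z) = ∫ dμ(x)/(z − x). -/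
def stieltjes (μ : Measure ℂ) (z : ℂ) : ℂ := ∫ x, (z - x)⁻¹ ∂μ

/-- M_μ : the zero set of the Cauchy–Stieltjes transform outside the support of μ. -/
def Mset (μ : Measure ℂ) : Set ℂ := {z | z ∉ measSupp μ ∧ stieltjes μ z = 0}

/-- N_μ(ε) : the ε-neighborhood of supp(μ) ∪ M_μ. -/
def Nset (μ : Measure ℂ) (ε : ℝ) : Set ℂ :=
  {z | Metric.infDist z (measSupp μ ∪ Mset μ) < ε}

/-! Outside the roots, a critical point `z` of `pₙ` satisfies `∑ⱼ (z - Xⱼ)⁻¹ = 0`, and by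
Gauss–Lucas it lies in the convex hull of `supp μ`. On the compact set `K` of such points outside
`N_μ(ε)` the transform `m_μ` is continuous and nonvanishing, so `‖m_μ‖ ≥ δ > 0`, and every
`(· - x)⁻¹` with `x ∈ supp μ` is `ε⁻²`-Lipschitz there. Covering `K` by finitely many balls of
radius `ε²δ/4`, a critical point in the ball around `w` forces the i.i.d. sum
`∑ⱼ ((w - Xⱼ)⁻¹ - m_μ(w))` to have norm at least `3δn/4`, which Hoeffding's inequality
(applied to real and imaginary parts) makes exponentially unlikely. -/

open Metric Real Set

lemma measSupp_eq_support (μ : Measure ℂ) : measSupp μ = μ.support := by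
  ext x
  simp [measSupp, Measure.mem_support_iff_forall, pos_iff_ne_zero]

lemma ae_mem_measSupp (μ : Measure ℂ) : ∀ᵐ x ∂μ, x ∈ measSupp μ :=
  measSupp_eq_support μ ▸ Measure.support_mem_ae

lemma isOpen_Nset (μ : Measure ℂ) (ε : ℝ) : IsOpen (Nset μ ε) :=
  isOpen_lt (continuous_infDist_pt _) continuous_const

section OutsideNset

variable {μ : Measure ℂ} {ε : ℝ} {z : ℂ}

lemma le_dist_of_notMem_Nset (hz : z ∉ Nset μ ε) {y : ℂ} (hy : y ∈ measSupp μ ∪ Mset μ) :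
    ε ≤ dist z y :=
  (not_lt.mp hz).trans (infDist_le_dist_of_mem hy)

lemma le_norm_sub_of_notMem_Nset (hz : z ∉ Nset μ ε) {x : ℂ} (hx : x ∈ measSupp μ) :
    ε ≤ ‖z - x‖ :=
  dist_eq_norm z x ▸ le_dist_of_notMem_Nset hz (Or.inl hx)

lemma stieltjes_ne_zero_of_notMem_Nset (hε : 0 < ε) (hz : z ∉ Nset μ ε) :
    stieltjes μ z ≠ 0 := by
  have hzz : ¬ z ∈ measSupp μ ∪ Mset μ := fun h => by
    simpa using hε.trans_le (le_dist_of_notMem_Nset hz h)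
  exact fun h0 => hzz (Or.inr ⟨fun h => hzz (Or.inl h), h0⟩)

end OutsideNset

lemma norm_inv_sub_inv_le {𝕜 : Type*} [NormedDivisionRing 𝕜] {a b : 𝕜} {ε : ℝ} (hε : 0 < ε)
    (ha : ε ≤ ‖a‖) (hb : ε ≤ ‖b‖) : ‖a⁻¹ - b⁻¹‖ ≤ ‖a - b‖ / ε ^ 2 := by
  have ha0 : a ≠ 0 := norm_pos_iff.mp (hε.trans_le ha)
  have hb0 : b ≠ 0 := norm_pos_iff.mp (hε.trans_le hb)
  rw [inv_sub_inv' ha0 hb0, norm_mul, norm_mul, norm_inv, norm_inv, norm_sub_rev b a,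
    le_div_iff₀ (by positivity)]
  calc ‖a‖⁻¹ * ‖a - b‖ * ‖b‖⁻¹ * ε ^ 2 = ‖a - b‖ * ((ε / ‖a‖) * (ε / ‖b‖)) := by ring
    _ ≤ ‖a - b‖ * (1 * 1) := by
        gcongr
        · exact (div_le_one (hε.trans_le ha)).mpr ha
        · exact (div_le_one (hε.trans_le hb)).mpr hb
    _ = ‖a - b‖ := by ring

section Stieltjes

variable {μ : Measure ℂ} {ε : ℝ}

lemma ae_norm_inv_sub_le_of_notMem_Nset (hε : 0 < ε) {z : ℂ} (hz : z ∉ Nset μ ε) :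
    ∀ᵐ x ∂μ, ‖(z - x)⁻¹‖ ≤ ε⁻¹ := by
  filter_upwards [ae_mem_measSupp μ] with x hx
  rw [norm_inv]
  exact inv_anti₀ hε (le_norm_sub_of_notMem_Nset hz hx)

lemma integrable_inv_sub_of_notMem_Nset [IsFiniteMeasure μ] (hε : 0 < ε) {z : ℂ}
    (hz : z ∉ Nset μ ε) :
    Integrable (fun x => (z - x)⁻¹) μ :=
  Integrable.mono' (integrable_const ε⁻¹) (by fun_prop) (ae_norm_inv_sub_le_of_notMem_Nset hε hz)

lemma norm_stieltjes_sub_le [IsProbabilityMeasure μ] (hε : 0 < ε) {z w : ℂ} (hz : z ∉ Nset μ ε)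
    (hw : w ∉ Nset μ ε) :
    ‖stieltjes μ z - stieltjes μ w‖ ≤ ‖z - w‖ / ε ^ 2 := by
  rw [stieltjes, stieltjes, ← integral_sub (integrable_inv_sub_of_notMem_Nset hε hz)
    (integrable_inv_sub_of_notMem_Nset hε hw)]
  refine (norm_integral_le_of_norm_le (integrable_const (‖z - w‖ / ε ^ 2)) ?_).trans (by simp)
  filter_upwards [ae_mem_measSupp μ] with x hx
  simpa using norm_inv_sub_inv_le hε (le_norm_sub_of_notMem_Nset hz hx)
    (le_norm_sub_of_notMem_Nset hw hx)

lemma continuousOn_stieltjes [IsProbabilityMeasure μ] (hε : 0 < ε) :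
    ContinuousOn (stieltjes μ) (Nset μ ε)ᶜ := by
  refine (LipschitzOnWith.of_dist_le_mul (K := (ε ^ 2)⁻¹.toNNReal) fun z hz w hw => ?_).continuousOn
  rw [dist_eq_norm, dist_eq_norm, Real.coe_toNNReal _ (by positivity), inv_mul_eq_div]
  exact norm_stieltjes_sub_le hε hz hw

end Stieltjes

lemma IsCompact.exists_pos_le_norm {α E : Type*} [TopologicalSpace α] [NormedAddCommGroup E]
    {K : Set α} (hK : IsCompact K) {f : α → E} (hf : ContinuousOn f K) (hf0 : ∀ z ∈ K, f z ≠ 0) :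
    ∃ δ > 0, ∀ z ∈ K, δ ≤ ‖f z‖ := by
  rcases K.eq_empty_or_nonempty with rfl | hne
  · exact ⟨1, one_pos, by simp⟩
  obtain ⟨z₀, hz₀, hmin⟩ := hK.exists_isMinOn hne hf.norm
  exact ⟨‖f z₀‖, norm_pos_iff.mpr (hf0 z₀ hz₀), fun z hz => hmin hz⟩

section CriticalPoints

variable {ι : Type*} {s : Finset ι} {x : ι → ℂ} {z : ℂ}

lemma mem_convexHull_of_mem_roots_derivative
    (hz : z ∈ (∏ j ∈ s, (X - C (x j))).derivative.roots) : z ∈ convexHull ℝ (x '' s) := by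
  obtain ⟨hp', hroot⟩ := mem_roots'.mp hz
  have hdeg : 0 < (∏ j ∈ s, (X - C (x j))).degree := by
    by_contra! h
    exact hp' (by rw [eq_C_of_degree_le_zero h, derivative_C])
  refine convexHull_mono ?_ (rootSet_derivative_subset_convexHull_rootSet hdeg
    (mem_rootSet.mpr ⟨hp', by simpa using hroot⟩))
  intro r hr
  obtain ⟨j, hj, hrj⟩ :=
    Finset.prod_eq_zero_iff.mp (by simpa [eval_prod] using (mem_rootSet.mp hr).2)
  exact ⟨j, hj, (sub_eq_zero.mp hrj).symm⟩

lemma sum_inv_sub_eq_zero_of_mem_roots_derivative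
    (hz : z ∈ (∏ j ∈ s, (X - C (x j))).derivative.roots) (hzx : ∀ j ∈ s, z ≠ x j) :
    ∑ j ∈ s, (z - x j)⁻¹ = 0 := by
  set p := ∏ j ∈ s, (X - C (x j))
  have hp : p.eval z ≠ 0 := by
    simpa [p, eval_prod, Finset.prod_eq_zero_iff, sub_eq_zero] using hzx
  have hroots : p.roots = s.val.map x := by
    rw [← roots_multiset_prod_X_sub_C (s.val.map x), Multiset.map_map]
    rfl
  have := (IsAlgClosed.splits p).eval_derivative_div_eval_of_ne_zero hp
  rw [(mem_roots'.mp hz).2.eq_zero, zero_div, hroots, Multiset.map_map] at this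
  simp only [Function.comp_def, one_div] at this
  rw [Finset.sum_eq_multiset_sum]
  exact this.symm

end CriticalPoints

lemma card_mul_sub_le_norm_sum_inv_sub {ι : Type*} (s : Finset ι) (x : ι → ℂ) {z w m : ℂ}
    {ε : ℝ} (hε : 0 < ε) (hz : ∀ j ∈ s, ε ≤ ‖z - x j‖) (hw : ∀ j ∈ s, ε ≤ ‖w - x j‖)
    (hsum : ∑ j ∈ s, (z - x j)⁻¹ = 0) :
    s.card * (‖m‖ - ‖w - z‖ / ε ^ 2) ≤ ‖∑ j ∈ s, ((w - x j)⁻¹ - m)‖ := by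
  have hsplit : ∑ j ∈ s, ((w - x j)⁻¹ - m) =
      ∑ j ∈ s, ((w - x j)⁻¹ - (z - x j)⁻¹) - s.card * m := by
    simp [Finset.sum_sub_distrib, hsum]
  have hclose : ‖∑ j ∈ s, ((w - x j)⁻¹ - (z - x j)⁻¹)‖ ≤ s.card * (‖w - z‖ / ε ^ 2) := by
    refine (norm_sum_le _ _).trans ?_
    rw [← nsmul_eq_mul, ← Finset.sum_const]
    refine Finset.sum_le_sum fun j hj => ?_
    simpa using norm_inv_sub_inv_le hε (hw j hj) (hz j hj)
  rw [hsplit]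
  calc s.card * (‖m‖ - ‖w - z‖ / ε ^ 2)
      = ‖(s.card : ℂ) * m‖ - s.card * (‖w - z‖ / ε ^ 2) := by simp [mul_sub]
    _ ≤ ‖(s.card : ℂ) * m‖ - ‖∑ j ∈ s, ((w - x j)⁻¹ - (z - x j)⁻¹)‖ := by gcongr
    _ ≤ ‖(s.card : ℂ) * m - ∑ j ∈ s, ((w - x j)⁻¹ - (z - x j)⁻¹)‖ := norm_sub_norm_le _ _
    _ = _ := norm_sub_rev _ _

lemma exists_deviation_of_mem_roots_derivative {μ : Measure ℂ} {ε δ : ℝ} (hε : 0 < ε)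
    {T : Finset ℂ} (hT : ∀ w ∈ T, w ∉ Nset μ ε ∧ δ ≤ ‖stieltjes μ w‖)
    (hcover : closure (convexHull ℝ (measSupp μ)) \ Nset μ ε ⊆ ⋃ w ∈ T, ball w (ε ^ 2 * δ / 4))
    {n : ℕ} {x : ℕ → ℂ} (hx : ∀ j ∈ Finset.range n, x j ∈ measSupp μ) {z : ℂ}
    (hz : z ∈ (∏ j ∈ Finset.range n, (X - C (x j))).derivative.roots) (hzN : z ∉ Nset μ ε) :
    ∃ w ∈ T, 3 * δ / 4 * n ≤ ‖∑ j ∈ Finset.range n, ((w - x j)⁻¹ - stieltjes μ w)‖ := by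
  have hzK : z ∈ closure (convexHull ℝ (measSupp μ)) :=
    subset_closure (convexHull_mono (by rintro _ ⟨j, hj, rfl⟩; exact hx j hj)
      (mem_convexHull_of_mem_roots_derivative hz))
  obtain ⟨w, hwT, hzw⟩ := mem_iUnion₂.mp (hcover ⟨hzK, hzN⟩)
  obtain ⟨hwN, hδw⟩ := hT w hwT
  have hzx : ∀ j ∈ Finset.range n, ε ≤ ‖z - x j‖ := fun j hj =>
    le_norm_sub_of_notMem_Nset hzN (hx j hj)
  have hsum := sum_inv_sub_eq_zero_of_mem_roots_derivative hz fun j hj h => by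
    simpa [h] using hε.trans_le (hzx j hj)
  refine ⟨w, hwT, le_trans ?_ (card_mul_sub_le_norm_sum_inv_sub _ _ hε hzx
    (fun j hj => le_norm_sub_of_notMem_Nset hwN (hx j hj)) hsum)⟩
  rw [Finset.card_range, mul_comm]
  have : ‖w - z‖ / ε ^ 2 < δ / 4 := by
    rw [div_lt_iff₀ (by positivity), ← dist_eq_norm]
    linarith [mem_ball.mp hzw, dist_comm z w]
  gcongr
  linarith

lemma exists_stieltjes_bound_finite_cover {μ : Measure ℂ} [IsProbabilityMeasure μ]
    (hsupp : IsCompact (measSupp μ)) {ε : ℝ} (hε : 0 < ε) :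
    ∃ δ > 0, ∃ T : Finset ℂ, (∀ w ∈ T, w ∉ Nset μ ε ∧ δ ≤ ‖stieltjes μ w‖) ∧
      closure (convexHull ℝ (measSupp μ)) \ Nset μ ε ⊆ ⋃ w ∈ T, ball w (ε ^ 2 * δ / 4) := by
  have hK : IsCompact (closure (convexHull ℝ (measSupp μ)) \ Nset μ ε) :=
    (isBounded_convexHull.mpr hsupp.isBounded).isCompact_closure.diff (isOpen_Nset μ ε)
  obtain ⟨δ, hδ, hδK⟩ := hK.exists_pos_le_norm ((continuousOn_stieltjes hε).mono fun z hz => hz.2)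
    fun z hz => stieltjes_ne_zero_of_notMem_Nset hε hz.2
  obtain ⟨T, hTK, hcover⟩ := hK.elim_nhds_subcover (fun w => ball w (ε ^ 2 * δ / 4))
    fun w _ => ball_mem_nhds w (by positivity)
  exact ⟨δ, hδ, T, fun w hw => ⟨(hTK w hw).2, hδK w (hTK w hw)⟩, hcover⟩

lemma half_le_abs_re_or_half_le_abs_im {v : ℂ} {a : ℝ} (h : a ≤ ‖v‖) :
    a / 2 ≤ |v.re| ∨ a / 2 ≤ |v.im| := by
  by_contra! hv
  linarith [Complex.norm_le_abs_re_add_abs_im v]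

section Hoeffding

variable {Ω E : Type*} [MeasurableSpace Ω] [MeasurableSpace E] {P : Measure Ω}
  [IsProbabilityMeasure P] {μ : Measure E} {X : ℕ → Ω → E}

lemma measureReal_le_sum_sub_integral_le (hmeas : ∀ j, Measurable (X j))
    (hdist : ∀ j, P.map (X j) = μ) (hindep : iIndepFun X P) {g : E → ℝ} (hg : Measurable g)
    {M : ℝ} (hgM : ∀ᵐ x ∂μ, |g x| ≤ M) {t : ℝ} (ht : 0 ≤ t) (n : ℕ) :
    P.real {ω | t ≤ ∑ j ∈ Finset.range n, (g (X j ω) - ∫ x, g x ∂μ)} ≤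
      exp (-t ^ 2 / (2 * n * M ^ 2)) := by
  have hsubG : ∀ j, HasSubgaussianMGF (fun ω => g (X j ω) - ∫ x, g x ∂μ)
      ((‖M - -M‖₊ / 2) ^ 2) P := by
    intro j
    have hbound : ∀ᵐ ω ∂P, g (X j ω) ∈ Icc (-M) M :=
      ae_of_ae_map (hmeas j).aemeasurable (p := fun y => g y ∈ Icc (-M) M)
        (by rw [hdist j]; filter_upwards [hgM] with x hx using abs_le.mp hx)
    have hmean : ∫ ω, (g ∘ X j) ω ∂P = ∫ x, g x ∂μ := by
      rw [← hdist j, integral_map (hmeas j).aemeasurable hg.aestronglyMeasurable]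
      rfl
    have h := hasSubgaussianMGF_of_mem_Icc (hg.comp (hmeas j)).aemeasurable hbound
    rwa [hmean] at h
  have h := HasSubgaussianMGF.measure_sum_range_ge_le_of_iIndepFun
    (hindep.comp (fun _ y => g y - ∫ x, g x ∂μ) fun _ => hg.sub_const _)
    (fun j _ => hsubG j) ht (n := n)
  have hc : (((‖M - -M‖₊ / 2) ^ 2 : NNReal) : ℝ) = M ^ 2 := by
    push_cast [coe_nnnorm, Real.norm_eq_abs, div_pow, sq_abs]
    ring
  rwa [hc] at h

lemma measureReal_le_abs_sum_sub_integral_le (hmeas : ∀ j, Measurable (X j))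
    (hdist : ∀ j, P.map (X j) = μ) (hindep : iIndepFun X P) {g : E → ℝ} (hg : Measurable g)
    {M : ℝ} (hgM : ∀ᵐ x ∂μ, |g x| ≤ M) {t : ℝ} (ht : 0 ≤ t) (n : ℕ) :
    P.real {ω | t ≤ |∑ j ∈ Finset.range n, (g (X j ω) - ∫ x, g x ∂μ)|} ≤
      2 * exp (-t ^ 2 / (2 * n * M ^ 2)) := by
  have hupper := measureReal_le_sum_sub_integral_le hmeas hdist hindep hg hgM ht n
  have hlower := measureReal_le_sum_sub_integral_le hmeas hdist hindep hg.neg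
    (by simpa using hgM) ht n
  calc _ ≤ P.real ({ω | t ≤ ∑ j ∈ Finset.range n, (g (X j ω) - ∫ x, g x ∂μ)} ∪
          {ω | t ≤ ∑ j ∈ Finset.range n, ((-g) (X j ω) - ∫ x, (-g) x ∂μ)}) := by
        refine measureReal_mono fun ω hω => ?_
        simp only [Pi.neg_apply, integral_neg, mem_union, mem_ofPred_eq] at hω ⊢
        refine (le_abs.mp hω).imp id fun h => h.trans_eq ?_
        rw [← Finset.sum_neg_distrib]
        exact Finset.sum_congr rfl fun j _ => by ring
    _ ≤ _ := measureReal_union_le _ _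
    _ ≤ 2 * exp (-t ^ 2 / (2 * n * M ^ 2)) := by linarith

lemma measureReal_le_norm_sum_sub_integral_le (hmeas : ∀ j, Measurable (X j))
    (hdist : ∀ j, P.map (X j) = μ) (hindep : iIndepFun X P) {f : E → ℂ} (hf : Measurable f)
    {M : ℝ} (hfM : ∀ᵐ x ∂μ, ‖f x‖ ≤ M) {a : ℝ} (ha : 0 ≤ a) (n : ℕ) :
    P.real {ω | a * n ≤ ‖∑ j ∈ Finset.range n, (f (X j ω) - ∫ x, f x ∂μ)‖} ≤
      4 * exp (-(a ^ 2 / (8 * M ^ 2) * n)) := by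
  have : IsProbabilityMeasure μ := hdist 0 ▸ Measure.isProbabilityMeasure_map (hmeas 0).aemeasurable
  have hint : Integrable f μ := Integrable.mono' (integrable_const M) hf.aestronglyMeasurable hfM
  have hexp : -(a * n / 2) ^ 2 / (2 * n * M ^ 2) = -(a ^ 2 / (8 * M ^ 2) * n) := by
    rcases eq_or_ne (n : ℝ) 0 with hn | hn
    · simp [hn]
    rcases eq_or_ne M 0 with hM | hM
    · simp [hM]
    field_simp
    ring
  have hre := measureReal_le_abs_sum_sub_integral_le hmeas hdist hindep
    (Complex.measurable_re.comp hf) (hfM.mono fun x hx => (Complex.abs_re_le_norm _).trans hx)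
    (t := a * n / 2) (by positivity) n
  have him := measureReal_le_abs_sum_sub_integral_le hmeas hdist hindep
    (Complex.measurable_im.comp hf) (hfM.mono fun x hx => (Complex.abs_im_le_norm _).trans hx)
    (t := a * n / 2) (by positivity) n
  rw [hexp] at hre him
  calc _ ≤ P.real ({ω | a * n / 2 ≤ |∑ j ∈ Finset.range n,
              ((Complex.re ∘ f) (X j ω) - ∫ x, (Complex.re ∘ f) x ∂μ)|} ∪
          {ω | a * n / 2 ≤ |∑ j ∈ Finset.range n,
              ((Complex.im ∘ f) (X j ω) - ∫ x, (Complex.im ∘ f) x ∂μ)|}) := by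
        refine measureReal_mono fun ω hω => ?_
        have hre_int : ∫ x, (f x).re ∂μ = (∫ x, f x ∂μ).re := integral_re hint
        have him_int : ∫ x, (f x).im ∂μ = (∫ x, f x ∂μ).im := integral_im hint
        simpa [hre_int, him_int, Complex.re_sum, Complex.im_sum] using
          half_le_abs_re_or_half_le_abs_im hω
    _ ≤ _ := measureReal_union_le _ _
    _ ≤ 4 * exp (-(a ^ 2 / (8 * M ^ 2) * n)) := by linarith

end Hoeffding

/-- **Theorem (no outliers in the unperturbed model).**
Let μ be a compactly supported probability measure on ℂ and X₁, …, Xₙ iid with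
distribution μ.  For every ε > 0 there are constants C, c > 0 (depending only on μ and ε)
so that with probability at least 1 − C e^{−cn} the polynomial pₙ(z) = ∏_{j=1}^n (z − X_j)
has no critical points outside N_μ(ε). -/
theorem no_outliers_unperturbed
    {Ω : Type*} [MeasurableSpace Ω] (P : Measure Ω) [IsProbabilityMeasure P]
    (μ : Measure ℂ) [IsProbabilityMeasure μ] (hsupp : IsCompact (measSupp μ))
    (X : ℕ → Ω → ℂ) (hmeas : ∀ j, Measurable (X j))
    (hdist : ∀ j, Measure.map (X j) P = μ)
    (hindep : iIndepFun X P)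
    (ε : ℝ) (hε : 0 < ε) :
    ∃ C > (0 : ℝ), ∃ c > (0 : ℝ), ∀ n : ℕ,
      P {ω | ∃ z ∈ ((∏ j ∈ Finset.range n,
            (Polynomial.X - Polynomial.C (X j ω))).derivative).roots,
          z ∉ Nset μ ε}
        ≤ ENNReal.ofReal (C * Real.exp (-(c * n))) := by
  obtain ⟨δ, hδ, T, hT, hcover⟩ := exists_stieltjes_bound_finite_cover hsupp hε
  -- Hoeffding's exponent for deviations `3δn/4` of variables bounded by `ε⁻¹`
  set c := (3 * δ / 4) ^ 2 / (8 * ε⁻¹ ^ 2)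
  refine ⟨4 * T.card + 1, by positivity, c, by positivity, fun n => ?_⟩
  set D : ℂ → Set Ω := fun w =>
    {ω | 3 * δ / 4 * n ≤ ‖∑ j ∈ Finset.range n, ((w - X j ω)⁻¹ - stieltjes μ w)‖}
  have hsupp_ae : ∀ᵐ ω ∂P, ∀ j, X j ω ∈ measSupp μ :=
    ae_all_iff.mpr fun j => ae_of_ae_map (hmeas j).aemeasurable (hdist j ▸ ae_mem_measSupp μ)
  have hsub : {ω | ∃ z ∈ ((∏ j ∈ Finset.range n,
      (Polynomial.X - Polynomial.C (X j ω))).derivative).roots, z ∉ Nset μ ε} ≤ᵐ[P]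
      ⋃ w ∈ T, D w := by
    filter_upwards [hsupp_ae] with ω hω ⟨z, hz, hzN⟩
    obtain ⟨w, hwT, hw⟩ :=
      exists_deviation_of_mem_roots_derivative hε hT hcover (fun j _ => hω j) hz hzN
    exact mem_biUnion hwT hw
  have hdev : ∀ w ∈ T, P.real (D w) ≤ 4 * exp (-(c * n)) := fun w hw =>
    measureReal_le_norm_sum_sub_integral_le hmeas hdist hindep (by fun_prop)
      (ae_norm_inv_sub_le_of_notMem_Nset hε (hT w hw).1) (by positivity) n
  calc _ ≤ P (⋃ w ∈ T, D w) := measure_mono_ae hsub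
    _ = ENNReal.ofReal (P.real (⋃ w ∈ T, D w)) := (ofReal_measureReal (measure_ne_top _ _)).symm
    _ ≤ ENNReal.ofReal ((4 * T.card + 1) * exp (-(c * n))) := by
        refine ENNReal.ofReal_le_ofReal ((measureReal_biUnion_finset_le _ _).trans ?_)
        refine (Finset.sum_le_card_nsmul _ _ _ hdev).trans ?_
        rw [nsmul_eq_mul]
        nlinarith [exp_pos (-(c * n))]
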